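/- arXiv:1712.08006 — 4 statements merged into one kernel-verified Lean document; each statement's English description precedes it below -/
import Mathlib

section
/- Let G = (T, E) be a finite graph where T is the set of cells, E ⊆ T × T the set of internal edges (each internal edge a joins two distinct cells K_a, L_a), and let B be a set of boundary edges, each boundary edge b attached to a single cell K_b, with B nonempty and the graph connected through internal and boundary edges (every cell is connected to some boundary edge through internal edges). Given strictly positive weights w_a for all internal edges and w_b for all boundary edges, the quadratic form Q(u) = Σ_{a ∈ E} w_a (u_{L_a} − u_{K_a})² + Σ_{b ∈ B} w_b u_{K_b}² on ℝ^T is positive definite. -/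
/-- positive definiteness of the finite-volume quadratic form
`Q(u) = Σ_a w_a (u_{L_a} − u_{K_a})² + Σ_b w_b u_{K_b}²` on a finite cell set `T`
with internal edges `E` (joining distinct cells `Ka a`, `La a`), boundary edges `B`
(attached to cells `Kb b`), strictly positive weights, `B` nonempty, and every cell
connected through internal edges to a cell carrying a boundary edge. -/
theorem stmt11 {T E B : Type*} [Fintype T] [Fintype E] [Fintype B]
    [Nonempty T] [Nonempty B]
    (Ka La : E → T) (hKL : ∀ a, Ka a ≠ La a) (Kb : B → T)
    (w : E → ℝ) (hw : ∀ a, 0 < w a)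
    (wb : B → ℝ) (hwb : ∀ b, 0 < wb b)
    (hconn : ∀ K : T, ∃ L : T, (∃ b, Kb b = L) ∧
      Relation.ReflTransGen
        (fun x y => ∃ a, (Ka a = x ∧ La a = y) ∨ (Ka a = y ∧ La a = x)) K L)
    (u : T → ℝ) (hu : u ≠ 0) :
    0 < ∑ a, w a * (u (La a) - u (Ka a)) ^ 2 + ∑ b, wb b * u (Kb b) ^ 2 := by
  have h1 : ∀ a ∈ (Finset.univ : Finset E), 0 ≤ w a * (u (La a) - u (Ka a)) ^ 2 :=
    fun a _ => mul_nonneg (hw a).le (sq_nonneg _)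
  have h2 : ∀ b ∈ (Finset.univ : Finset B), 0 ≤ wb b * u (Kb b) ^ 2 :=
    fun b _ => mul_nonneg (hwb b).le (sq_nonneg _)
  have hs1 : 0 ≤ ∑ a, w a * (u (La a) - u (Ka a)) ^ 2 := Finset.sum_nonneg h1
  have hs2 : 0 ≤ ∑ b, wb b * u (Kb b) ^ 2 := Finset.sum_nonneg h2
  rcases lt_or_eq_of_le (add_nonneg hs1 hs2) with h | h
  · exact h
  exfalso
  have hsum1 : ∑ a, w a * (u (La a) - u (Ka a)) ^ 2 = 0 := by linarith
  have hsum2 : ∑ b, wb b * u (Kb b) ^ 2 = 0 := by linarith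
  have he : ∀ a : E, u (La a) = u (Ka a) := by
    intro a
    have := (Finset.sum_eq_zero_iff_of_nonneg h1).mp hsum1 a (Finset.mem_univ a)
    have h0 : (u (La a) - u (Ka a)) ^ 2 = 0 := by
      rcases mul_eq_zero.mp this with h' | h'
      · exact absurd h' (hw a).ne'
      · exact h'
    have := pow_eq_zero_iff (n := 2) (by norm_num) |>.mp h0
    linarith
  have hb : ∀ b : B, u (Kb b) = 0 := by
    intro b
    have := (Finset.sum_eq_zero_iff_of_nonneg h2).mp hsum2 b (Finset.mem_univ b)
    rcases mul_eq_zero.mp this with h' | h'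
    · exact absurd h' (hwb b).ne'
    · exact pow_eq_zero_iff (n := 2) (by norm_num) |>.mp h'
  apply hu
  funext K
  have hpathEq : ∀ x y : T, Relation.ReflTransGen
      (fun x y => ∃ a, (Ka a = x ∧ La a = y) ∨ (Ka a = y ∧ La a = x)) x y →
      u x = u y := by
    intro x y hp
    induction hp with
    | refl => rfl
    | tail _ hstep ih =>
      obtain ⟨a, h' | h'⟩ := hstep
      · rw [ih, ← h'.1, ← h'.2, he a]
      · rw [ih, ← h'.1, ← h'.2, he a]
  obtain ⟨L, ⟨b, hbL⟩, hpath⟩ := hconn K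
  have huL : u K = u L := hpathEq K L hpath
  simp only [Pi.zero_apply]
  rw [huL, ← hbL, hb b]
end

section
/- Under the assumptions of the previous graph setting (finite cell set T, internal edges E with positive weights w_a, boundary edges B with positive weights w_b, every cell connected through internal edges to a cell carrying a boundary edge), for every f ∈ ℝ^T the finite volume system: for all K ∈ T, Σ_{a internal, a = (K,L) or (L,K)} w_a (u_L − u_K) − Σ_{b ∈ B attached to K} w_b u_K = −f_K, has a unique solution u ∈ ℝ^T. -/
open Finset

section Aux

variable {T E B : Type*} [Fintype T] [Fintype E] [Fintype B] [DecidableEq T]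

private def Amap (Ka La : E → T) (Kb : B → T) (w : E → ℝ) (wb : B → ℝ) :
    (T → ℝ) →ₗ[ℝ] (T → ℝ) where
  toFun u := fun K =>
    (∑ a, ((if Ka a = K then w a * (u (La a) - u K) else 0) +
           (if La a = K then w a * (u (Ka a) - u K) else 0))) -
      (∑ b, if Kb b = K then wb b * u K else 0)
  map_add' u v := by
    funext K
    have h1 : ∀ a : E,
        ((if Ka a = K then w a * (u (La a) + v (La a) - (u K + v K)) else 0) +
         (if La a = K then w a * (u (Ka a) + v (Ka a) - (u K + v K)) else 0)) =
        (((if Ka a = K then w a * (u (La a) - u K) else 0) +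
          (if La a = K then w a * (u (Ka a) - u K) else 0)) +
         ((if Ka a = K then w a * (v (La a) - v K) else 0) +
          (if La a = K then w a * (v (Ka a) - v K) else 0))) := by
      intro a; split_ifs <;> ring
    have h2 : ∀ b : B, (if Kb b = K then wb b * (u K + v K) else 0) =
        ((if Kb b = K then wb b * u K else 0) + (if Kb b = K then wb b * v K else 0)) := by
      intro b; split_ifs <;> ring
    simp only [Pi.add_apply]
    rw [Finset.sum_congr rfl fun a _ => h1 a, Finset.sum_congr rfl fun b _ => h2 b,
      Finset.sum_add_distrib, Finset.sum_add_distrib]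
    rw [sub_add_sub_comm]
    simp only [Finset.sum_add_distrib]
  map_smul' c u := by
    funext K
    have h1 : ∀ a : E,
        ((if Ka a = K then w a * (c * u (La a) - c * u K) else 0) +
         (if La a = K then w a * (c * u (Ka a) - c * u K) else 0)) =
        c * ((if Ka a = K then w a * (u (La a) - u K) else 0) +
             (if La a = K then w a * (u (Ka a) - u K) else 0)) := by
      intro a; split_ifs <;> ring
    have h2 : ∀ b : B, (if Kb b = K then wb b * (c * u K) else 0) =
        c * (if Kb b = K then wb b * u K else 0) := by
      intro b; split_ifs <;> ring
    simp only [RingHom.id_apply, Pi.smul_apply, smul_eq_mul]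
    rw [Finset.sum_congr rfl fun a _ => h1 a, Finset.sum_congr rfl fun b _ => h2 b,
      ← Finset.mul_sum, ← Finset.mul_sum]
    exact (mul_sub c _ _).symm

private lemma energy (Ka La : E → T) (Kb : B → T) (w : E → ℝ) (wb : B → ℝ) (u : T → ℝ) :
    ∑ K, u K * Amap Ka La Kb w wb u K =
      -(∑ a, w a * (u (La a) - u (Ka a)) ^ 2) - ∑ b, wb b * (u (Kb b)) ^ 2 := by
  have key : ∀ K, u K * Amap Ka La Kb w wb u K =
      (∑ a, ((if Ka a = K then u K * (w a * (u (La a) - u K)) else 0) +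
             (if La a = K then u K * (w a * (u (Ka a) - u K)) else 0))) -
      ∑ b, (if Kb b = K then u K * (wb b * u K) else 0) := by
    intro K
    simp only [Amap, LinearMap.coe_mk, AddHom.coe_mk]
    rw [mul_sub, Finset.mul_sum, Finset.mul_sum]
    congr 1
    · exact Finset.sum_congr rfl fun a _ => by split_ifs <;> ring
    · exact Finset.sum_congr rfl fun b _ => by split_ifs <;> ring
  have hE : ∑ K, ∑ a : E, ((if Ka a = K then u K * (w a * (u (La a) - u K)) else 0) +
             (if La a = K then u K * (w a * (u (Ka a) - u K)) else 0))
      = ∑ a : E, -(w a * (u (La a) - u (Ka a)) ^ 2) := by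
    rw [Finset.sum_comm]
    refine Finset.sum_congr rfl fun a _ => ?_
    rw [Finset.sum_add_distrib]
    simp only [Finset.sum_ite_eq, Finset.mem_univ, if_true]
    ring
  have hB : ∑ K, ∑ b : B, (if Kb b = K then u K * (wb b * u K) else 0)
      = ∑ b : B, wb b * (u (Kb b)) ^ 2 := by
    rw [Finset.sum_comm]
    refine Finset.sum_congr rfl fun b _ => ?_
    simp only [Finset.sum_ite_eq, Finset.mem_univ, if_true]
    ring
  rw [Finset.sum_congr rfl fun K _ => key K, Finset.sum_sub_distrib, hE, hB,
    Finset.sum_neg_distrib]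

end Aux

private lemma ker_trivial {T E B : Type*} [Fintype T] [Fintype E] [Fintype B] [DecidableEq T]
    (Ka La : E → T) (Kb : B → T)
    (w : E → ℝ) (hw : ∀ a, 0 < w a) (wb : B → ℝ) (hwb : ∀ b, 0 < wb b)
    (hconn : ∀ K : T, ∃ L : T, (∃ b, Kb b = L) ∧
      Relation.ReflTransGen
        (fun x y => ∃ a, (Ka a = x ∧ La a = y) ∨ (Ka a = y ∧ La a = x)) K L)
    (u : T → ℝ) (hu : Amap Ka La Kb w wb u = 0) : u = 0 := by
  have hen := energy Ka La Kb w wb u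
  rw [hu] at hen
  simp only [Pi.zero_apply, mul_zero, Finset.sum_const_zero] at hen
  have hE0 : ∑ a, w a * (u (La a) - u (Ka a)) ^ 2 = 0 ∧
      ∑ b, wb b * (u (Kb b)) ^ 2 = 0 := by
    have h1 : (0:ℝ) ≤ ∑ a, w a * (u (La a) - u (Ka a)) ^ 2 :=
      Finset.sum_nonneg fun a _ => mul_nonneg (hw a).le (sq_nonneg _)
    have h2 : (0:ℝ) ≤ ∑ b, wb b * (u (Kb b)) ^ 2 :=
      Finset.sum_nonneg fun b _ => mul_nonneg (hwb b).le (sq_nonneg _)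
    constructor <;> linarith
  have hedge : ∀ a : E, u (La a) = u (Ka a) := by
    intro a
    have := (Finset.sum_eq_zero_iff_of_nonneg
      (fun a _ => mul_nonneg (hw a).le (sq_nonneg (u (La a) - u (Ka a))))).mp hE0.1 a
      (Finset.mem_univ a)
    have h := (mul_eq_zero.mp this).resolve_left (ne_of_gt (hw a))
    have := pow_eq_zero_iff (n := 2) (by norm_num) |>.mp h
    linarith [sub_eq_zero.mp this]
  have hbd : ∀ b : B, u (Kb b) = 0 := by
    intro b
    have := (Finset.sum_eq_zero_iff_of_nonneg
      (fun b _ => mul_nonneg (hwb b).le (sq_nonneg (u (Kb b))))).mp hE0.2 b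
      (Finset.mem_univ b)
    have h := (mul_eq_zero.mp this).resolve_left (ne_of_gt (hwb b))
    exact pow_eq_zero_iff (n := 2) (by norm_num) |>.mp h
  funext K
  obtain ⟨L, ⟨b, hb⟩, hpath⟩ := hconn K
  have hconst : ∀ x y : T, Relation.ReflTransGen
      (fun x y => ∃ a, (Ka a = x ∧ La a = y) ∨ (Ka a = y ∧ La a = x)) x y → u x = u y := by
    intro x y h
    induction h with
    | refl => rfl
    | tail _ e ih =>
      obtain ⟨a, ⟨h1, h2⟩ | ⟨h1, h2⟩⟩ := e
      · rw [ih, ← h1, ← h2]; exact (hedge a).symm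
      · rw [ih, ← h1, ← h2]; exact hedge a
  rw [Pi.zero_apply, hconst K L hpath, ← hb, hbd b]

/-- the finite volume system
`Σ_{a=(K,L) or (L,K)} w_a (u_L − u_K) − Σ_{b attached to K} w_b u_K = −f_K` for all `K`
has a unique solution, under the same graph assumptions as before. -/
theorem stmt12 {T E B : Type*} [Fintype T] [Fintype E] [Fintype B] [DecidableEq T]
    [Nonempty T] [Nonempty B]
    (Ka La : E → T) (hKL : ∀ a, Ka a ≠ La a) (Kb : B → T)
    (w : E → ℝ) (hw : ∀ a, 0 < w a)
    (wb : B → ℝ) (hwb : ∀ b, 0 < wb b)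
    (hconn : ∀ K : T, ∃ L : T, (∃ b, Kb b = L) ∧
      Relation.ReflTransGen
        (fun x y => ∃ a, (Ka a = x ∧ La a = y) ∨ (Ka a = y ∧ La a = x)) K L)
    (f : T → ℝ) :
    ∃! u : T → ℝ, ∀ K : T,
      (∑ a, ((if Ka a = K then w a * (u (La a) - u K) else 0) +
             (if La a = K then w a * (u (Ka a) - u K) else 0))) -
        (∑ b, if Kb b = K then wb b * u K else 0) = -f K := by
  set A := Amap Ka La Kb w wb with hA
  have hinj : Function.Injective A := by
    rw [injective_iff_map_eq_zero']
    intro u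
    constructor
    · exact fun h => ker_trivial Ka La Kb w hw wb hwb hconn u h
    · rintro rfl; exact map_zero A
  have hsurj : Function.Surjective A := LinearMap.injective_iff_surjective.mp hinj
  obtain ⟨u, hu⟩ := hsurj (fun K => -f K)
  have hspec : ∀ v : T → ℝ, (∀ K : T,
      (∑ a, ((if Ka a = K then w a * (v (La a) - v K) else 0) +
             (if La a = K then w a * (v (Ka a) - v K) else 0))) -
        (∑ b, if Kb b = K then wb b * v K else 0) = -f K) ↔ A v = fun K => -f K := by
    intro v
    constructor
    · intro h; funext K; exact h K
    · intro h K; exact congrFun h K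
  refine ⟨u, (hspec u).mpr hu, fun v hv => hinj ?_⟩
  rw [hu, (hspec v).mp hv]
end

section
/- Let H₁, H₂ be real Hilbert spaces and B : H₁ × H₂ → ℝ a bounded bilinear form with |B(x,y)| ≤ M‖x‖‖y‖. Suppose there is β > 0 such that for every x ∈ H₁ with ‖x‖ = 1 there exists y ∈ H₂ with ‖y‖ ≤ 1 and B(x,y) ≥ β, and suppose that for every nonzero y ∈ H₂, sup_{x ∈ H₁} B(x,y) = +∞. Then for every bounded linear functional ℓ on H₂ there exists a unique x ∈ H₁ with B(x, y) = ℓ(y) for all y ∈ H₂, and ‖x‖ ≤ ‖ℓ‖/β. -/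
/-!
Via the Riesz representation on `H₂`, the form `B` is `B x y = ⟪A x, y⟫` for a bounded operator
`A : H₁ → H₂`. The inf-sup condition says `β ‖x‖ ≤ ‖A x‖`, so `A` is injective with closed range,
and the infinity condition says that no nonzero vector is orthogonal to the range of `A`. Hence
`A` is bijective, and `x = A⁻¹ (ℓ♯)`, where `ℓ♯` is the Riesz representative of `ℓ`, is the unique
solution; its norm is at most `‖ℓ♯‖ / β = ‖ℓ‖ / β`.
-/

open InnerProductSpace

theorem ContinuousLinearMap.surjective_of_antilipschitz_of_inner_eq_zero
    {𝕜 E F : Type*} [RCLike 𝕜]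
    [NormedAddCommGroup E] [NormedSpace 𝕜 E] [CompleteSpace E]
    [NormedAddCommGroup F] [InnerProductSpace 𝕜 F] [CompleteSpace F]
    (A : E →L[𝕜] F) {K : NNReal} (hA : AntilipschitzWith K A)
    (h : ∀ y, (∀ x, ⟪A x, y⟫_𝕜 = 0) → y = 0) : Function.Surjective A := by
  have hclosed : IsClosed ((A : E →ₗ[𝕜] F).range : Set F) := by
    rw [LinearMap.coe_range]
    exact hA.isClosed_range A.uniformContinuous
  have := hclosed.completeSpace_coe
  have horth : (A : E →ₗ[𝕜] F).rangeᗮ = ⊥ :=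
    (Submodule.eq_bot_iff _).2 fun y hy => h y fun x => hy _ ⟨x, rfl⟩
  exact LinearMap.range_eq_top.1 (Submodule.orthogonal_eq_bot_iff.1 horth)

section Real

variable {E F : Type*} [NormedAddCommGroup E] [NormedSpace ℝ E]

theorem LinearMap.exists_clm_inner_eq_of_bound
    [NormedAddCommGroup F] [InnerProductSpace ℝ F] [CompleteSpace F]
    (B : E →ₗ[ℝ] F →ₗ[ℝ] ℝ) (C : ℝ) (hC : ∀ x y, |B x y| ≤ C * ‖x‖ * ‖y‖) :
    ∃ A : E →L[ℝ] F, ∀ x y, ⟪A x, y⟫_ℝ = B x y :=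
  ⟨(toDual ℝ F).symm.toContinuousLinearEquiv.toContinuousLinearMap.comp
      (B.mkContinuous₂ C (by simpa only [Real.norm_eq_abs] using hC)),
    fun x y => by simp⟩

theorem LinearMap.exists_norm_le_one_and_mul_norm_le
    [SeminormedAddCommGroup F] [Module ℝ F] (B : E →ₗ[ℝ] F →ₗ[ℝ] ℝ) {β : ℝ}
    (h : ∀ x : E, ‖x‖ = 1 → ∃ y : F, ‖y‖ ≤ 1 ∧ β ≤ B x y) (x : E) :
    ∃ y : F, ‖y‖ ≤ 1 ∧ β * ‖x‖ ≤ B x y := by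
  rcases eq_or_ne x 0 with rfl | hx
  · exact ⟨0, by simp⟩
  have hnx : 0 < ‖x‖ := norm_pos_iff.2 hx
  obtain ⟨y, hy, hβy⟩ := h (‖x‖⁻¹ • x) (norm_smul_inv_norm hx)
  refine ⟨y, hy, ?_⟩
  rw [map_smul, LinearMap.smul_apply, smul_eq_mul, le_inv_mul_iff₀ hnx, mul_comm] at hβy
  exact hβy

theorem LinearMap.norm_le_inv_mul_norm_of_inner_eq
    [NormedAddCommGroup F] [InnerProductSpace ℝ F] (B : E →ₗ[ℝ] F →ₗ[ℝ] ℝ) {β : ℝ} (hβ : 0 < β)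
    (h : ∀ x : E, ‖x‖ = 1 → ∃ y : F, ‖y‖ ≤ 1 ∧ β ≤ B x y)
    {A : E → F} (hAB : ∀ x y, ⟪A x, y⟫_ℝ = B x y) (x : E) : ‖x‖ ≤ β⁻¹ * ‖A x‖ := by
  obtain ⟨y, hy, hβy⟩ := B.exists_norm_le_one_and_mul_norm_le h x
  rw [le_inv_mul_iff₀ hβ]
  calc β * ‖x‖ ≤ B x y := hβy
    _ = ⟪A x, y⟫_ℝ := (hAB x y).symm
    _ ≤ ‖A x‖ * ‖y‖ := real_inner_le_norm _ _
    _ ≤ ‖A x‖ := mul_le_of_le_one_right (norm_nonneg _) hy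

end Real

/-- Babuška's theorem for a bounded bilinear form `B` on a pair of real
Hilbert spaces satisfying the inf-sup condition (constant `β > 0`) and the infinity
condition: every bounded linear functional `ℓ` on `H₂` is represented by a unique
`x ∈ H₁` via `B(x, ·) = ℓ`, with `‖x‖ ≤ ‖ℓ‖ / β`. -/
theorem stmt13 {H₁ H₂ : Type*}
    [NormedAddCommGroup H₁] [InnerProductSpace ℝ H₁] [CompleteSpace H₁]
    [NormedAddCommGroup H₂] [InnerProductSpace ℝ H₂] [CompleteSpace H₂]
    (B : H₁ →ₗ[ℝ] H₂ →ₗ[ℝ] ℝ) (M : ℝ)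
    (hM : ∀ x y, |B x y| ≤ M * ‖x‖ * ‖y‖)
    (β : ℝ) (hβ : 0 < β)
    (hinf : ∀ x : H₁, ‖x‖ = 1 → ∃ y : H₂, ‖y‖ ≤ 1 ∧ β ≤ B x y)
    (hsur : ∀ y : H₂, y ≠ 0 → ∀ C : ℝ, ∃ x : H₁, C < B x y)
    (ℓ : H₂ →L[ℝ] ℝ) :
    ∃ x : H₁, (∀ y, B x y = ℓ y) ∧ ‖x‖ ≤ ‖ℓ‖ / β ∧
      ∀ x' : H₁, (∀ y, B x' y = ℓ y) → x' = x := by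
  obtain ⟨A, hAB⟩ := B.exists_clm_inner_eq_of_bound M hM
  have hbound := B.norm_le_inv_mul_norm_of_inner_eq hβ hinf hAB
  have hanti : AntilipschitzWith ⟨β⁻¹, by positivity⟩ A := A.antilipschitz_of_bound hbound
  have hsurj : Function.Surjective A := by
    refine A.surjective_of_antilipschitz_of_inner_eq_zero hanti fun y hy => ?_
    by_contra hy0
    obtain ⟨x, hx⟩ := hsur y hy0 0
    linarith [hy x, hAB x y]
  obtain ⟨x, hx⟩ := hsurj ((toDual ℝ H₂).symm ℓ)
  have hxℓ : ∀ y, B x y = ℓ y := fun y => by rw [← hAB, hx, toDual_symm_apply]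
  refine ⟨x, hxℓ, ?_, fun x' hx' => hanti.injective (ext_inner_right ℝ fun y => ?_)⟩
  · calc ‖x‖ ≤ β⁻¹ * ‖A x‖ := hbound x
      _ = ‖ℓ‖ / β := by rw [hx, LinearIsometryEquiv.norm_map, inv_mul_eq_div]
  · rw [hAB, hAB, hx', hxℓ]
end

section
/- Let K be a nondegenerate triangle in ℝ² with vertices W₁, W₂, W₃ and area |K|, and let φ_i(x) = (x − W_i)/(2|K|). Then every vector field p on K of the form p(x) = c + λx (with constant vector c ∈ ℝ² and scalar λ ∈ ℝ) can be written uniquely as p = Σᵢ πᵢ φ_i with πᵢ = ∫_{a_i} p · n_i ds, where a_i is the edge opposite W_i and n_i its outward unit normal. -/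
/-!
Since `nᵢ` is orthogonal to the edge `aᵢ` and `p(x) - p(y) = λ (x - y)`, the normal component
`p · nᵢ` is constant along `aᵢ`, so `πᵢ = |aᵢ| (c + λ Wᵢ₊₁) · nᵢ`. In the plane `|aᵢ| nᵢ` is the
edge vector turned by a right angle, in the sense fixed by the outward condition; hence
`πᵢ = -sign(D) · (c + λ Wᵢ₊₁) × aᵢ`, where `D = ±2|K|` is the signed double area of the triangle,
and `p = Σ πᵢ φᵢ` becomes a polynomial identity in the coordinates. The coefficients are
unique because affinely independent vertices make the fields `x ↦ x - Wᵢ` linearly independent.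
-/

open scoped RealInnerProductSpace

local notation "ℝ²" => EuclideanSpace ℝ (Fin 2)

def cross (u v : ℝ²) : ℝ := u 0 * v 1 - u 1 * v 0

lemma real_inner_fin_two (u v : ℝ²) : ⟪u, v⟫ = u 0 * v 0 + u 1 * v 1 := by
  simp [PiLp.inner_apply, Fin.sum_univ_two, mul_comm]

lemma norm_sq_fin_two (u : ℝ²) : ‖u‖ ^ 2 = u 0 ^ 2 + u 1 ^ 2 := by
  simp [EuclideanSpace.real_norm_sq_eq, Fin.sum_univ_two]

lemma cross_sq_add_inner_sq (u v : ℝ²) : cross u v ^ 2 + ⟪u, v⟫ ^ 2 = ‖u‖ ^ 2 * ‖v‖ ^ 2 := by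
  rw [norm_sq_fin_two, norm_sq_fin_two, real_inner_fin_two, cross]; ring

lemma norm_sq_mul_inner_of_inner_eq_zero {m e : ℝ²} (h : ⟪m, e⟫ = 0) (z : ℝ²) :
    ‖e‖ ^ 2 * ⟪z, m⟫ = cross m e * cross z e := by
  rw [real_inner_fin_two] at h
  rw [norm_sq_fin_two, real_inner_fin_two, cross, cross]
  linear_combination (z 0 * e 0 + z 1 * e 1) * h

/-- `cross m e = ±‖e‖` for a unit normal `m` of `e`; the sign is opposite to that of `cross w e`
for any `w` on the side of `e` that `m` points away from. -/
lemma abs_cross_mul_cross_of_inner_neg {m e w : ℝ²} (hperp : ⟪m, e⟫ = 0) (hunit : ‖m‖ = 1)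
    (hout : ⟪m, w⟫ < 0) : |cross w e| * cross m e = -(cross w e * ‖e‖) := by
  have hsq : cross m e ^ 2 = ‖e‖ ^ 2 := by
    simpa [hperp, hunit] using cross_sq_add_inner_sq m e
  have hsign : cross m e * cross w e ≤ 0 := by
    rw [← norm_sq_mul_inner_of_inner_eq_zero hperp, real_inner_comm]
    exact mul_nonpos_of_nonneg_of_nonpos (sq_nonneg _) hout.le
  have he := norm_nonneg e
  rcases sq_eq_sq_iff_eq_or_eq_neg.1 hsq with hm | hm <;> rw [hm] at hsign ⊢ <;>
    rcases le_or_gt 0 (cross w e) with hD | hD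
  · rw [abs_of_nonneg hD]; nlinarith
  · rw [abs_of_neg hD]; ring
  · rw [abs_of_nonneg hD]; ring
  · rw [abs_of_neg hD]; nlinarith

lemma abs_cross_mul_norm_mul_inner {m e w : ℝ²} (hperp : ⟪m, e⟫ = 0) (hunit : ‖m‖ = 1)
    (hout : ⟪m, w⟫ < 0) (y : ℝ²) : |cross w e| * (‖e‖ * ⟪y, m⟫) = -(cross w e * cross y e) := by
  rcases (norm_nonneg e).eq_or_lt with he | he
  · rw [norm_eq_zero.1 he.symm]; simp [cross]
  · apply mul_left_cancel₀ he.ne'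
    linear_combination |cross w e| * norm_sq_mul_inner_of_inner_eq_zero hperp y
      + cross y e * abs_cross_mul_cross_of_inner_neg hperp hunit hout

lemma integral_mul_inner_segment {E : Type*} [NormedAddCommGroup E] [InnerProductSpace ℝ E]
    {m u v : E} (h : ⟪m, u - v⟫ = 0) (c : E) (lam r : ℝ) :
    ∫ s in (0:ℝ)..1, r * ⟪c + lam • (s • u + (1 - s) • v), m⟫ = r * ⟪c + lam • u, m⟫ := by
  have hconst : ∀ s : ℝ, ⟪c + lam • (s • u + (1 - s) • v), m⟫ = ⟪c + lam • u, m⟫ := by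
    intro s
    have : s • u + (1 - s) • v = u - (1 - s) • (u - v) := by module
    rw [this, smul_sub, ← add_sub_assoc, inner_sub_left, smul_smul, real_inner_smul_left,
      real_inner_comm m (u - v), h, mul_zero, sub_zero]
  simp only [hconst, intervalIntegral.integral_const, sub_zero, one_smul]

lemma cross_sub_sub_cyclic (W : Fin 3 → ℝ²) (i : Fin 3) :
    cross (W i - W (i + 1)) (W (i + 1) - W (i + 2)) = cross (W 1 - W 0) (W 2 - W 0) := by
  fin_cases i <;> simp [cross] <;> ring

lemma abs_cross_mul_integral_edge_flux {W : Fin 3 → ℝ²} {m : ℝ²} {i : Fin 3}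
    (hperp : ⟪m, W (i + 1) - W (i + 2)⟫ = 0) (hunit : ‖m‖ = 1) (hout : ⟪m, W i - W (i + 1)⟫ < 0)
    (c : ℝ²) (lam : ℝ) :
    |cross (W 1 - W 0) (W 2 - W 0)| * ∫ s in (0:ℝ)..1, ‖W (i + 1) - W (i + 2)‖ *
        ⟪c + lam • (s • W (i + 1) + (1 - s) • W (i + 2)), m⟫
      = -(cross (W 1 - W 0) (W 2 - W 0) * cross (c + lam • W (i + 1)) (W (i + 1) - W (i + 2))) := by
  rw [integral_mul_inner_segment hperp, ← cross_sub_sub_cyclic W i]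
  exact abs_cross_mul_norm_mul_inner hperp hunit hout _

lemma sum_cross_smul_sub (W : Fin 3 → ℝ²) (c x : ℝ²) (lam : ℝ) :
    ∑ i, cross (c + lam • W (i + 1)) (W (i + 1) - W (i + 2)) • (x - W i)
      = -cross (W 1 - W 0) (W 2 - W 0) • (c + lam • x) := by
  ext j
  fin_cases j <;> simp [cross, Fin.sum_univ_three] <;> ring

lemma affineIndependent_of_cross_ne_zero {W : Fin 3 → ℝ²} (h : cross (W 1 - W 0) (W 2 - W 0) ≠ 0) :
    AffineIndependent ℝ W := by
  rw [affineIndependent_iff_of_fintype]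
  intro w hw hwW
  rw [Finset.univ.weightedVSub_eq_linear_combination hw] at hwW
  have h0 := congrArg (· 0) hwW
  have h1 := congrArg (· 1) hwW
  simp only [Fin.sum_univ_three, PiLp.add_apply, PiLp.smul_apply, smul_eq_mul,
    PiLp.zero_apply] at h0 h1 hw
  simp only [cross, PiLp.sub_apply] at h
  have hw1 : w 1 = 0 := by
    apply mul_left_cancel₀ h
    linear_combination (W 2 1 - W 0 1) * (h0 - W 0 0 * hw) - (W 2 0 - W 0 0) * (h1 - W 0 1 * hw)
  have hw2 : w 2 = 0 := by
    apply mul_left_cancel₀ h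
    linear_combination (W 1 0 - W 0 0) * (h1 - W 0 1 * hw) - (W 1 1 - W 0 1) * (h0 - W 0 0 * hw)
  have hw0 : w 0 = 0 := by linear_combination hw - hw1 - hw2
  intro i
  fin_cases i <;> assumption

theorem AffineIndependent.eq_zero_of_forall_sum_smul_sub_eq_zero {k V ι : Type*} [Field k]
    [AddCommGroup V] [Module k V] [Nontrivial V] [Fintype ι] {W : ι → V}
    (hW : AffineIndependent k W) {a : ι → k} (h : ∀ x, ∑ i, a i • (x - W i) = 0) : a = 0 := by
  have hW0 : ∑ i, a i • W i = 0 := by simpa using h 0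
  obtain ⟨x, hx⟩ := exists_ne (0 : V)
  have ha : ∑ i, a i = 0 := by
    have := h x
    simp only [smul_sub, Finset.sum_sub_distrib, hW0, sub_zero, ← Finset.sum_smul] at this
    exact (smul_eq_zero.1 this).resolve_right hx
  funext i
  exact hW.eq_zero_of_sum_eq_zero ha hW0 i (Finset.mem_univ i)

/-- unisolvence of the lowest-order Raviart–Thomas element on a
nondegenerate triangle with vertices `W 0, W 1, W 2` and area `area`. Any field
`p(x) = c + λx` is written uniquely as `p = Σᵢ πᵢ φᵢ` with `φᵢ(x) = (x − Wᵢ)/(2·area)`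
and `πᵢ = ∫_{aᵢ} p·nᵢ ds`, the flux through the edge `aᵢ` opposite `Wᵢ` (segment from
`W (i+1)` to `W (i+2)`) with outward unit normal `n i`. -/
theorem stmt19 (W : Fin 3 → EuclideanSpace ℝ (Fin 2))
    (hnd : (W 1 - W 0) 0 * (W 2 - W 0) 1 - (W 1 - W 0) 1 * (W 2 - W 0) 0 ≠ 0)
    (area : ℝ)
    (harea : area = |(W 1 - W 0) 0 * (W 2 - W 0) 1 - (W 1 - W 0) 1 * (W 2 - W 0) 0| / 2)
    (n : Fin 3 → EuclideanSpace ℝ (Fin 2))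
    (hunit : ∀ i, ‖n i‖ = 1)
    (hperp : ∀ i, (inner ℝ (n i) (W (i + 1) - W (i + 2)) : ℝ) = 0)
    (hout : ∀ i, (inner ℝ (n i) (W i - W (i + 1)) : ℝ) < 0)
    (c : EuclideanSpace ℝ (Fin 2)) (lam : ℝ)
    (p : EuclideanSpace ℝ (Fin 2) → EuclideanSpace ℝ (Fin 2))
    (hp : ∀ x, p x = c + lam • x)
    (π : Fin 3 → ℝ)
    (hπ : ∀ i, π i = ∫ s in (0:ℝ)..1, ‖W (i + 1) - W (i + 2)‖ *
        (inner ℝ (p (s • W (i + 1) + (1 - s) • W (i + 2))) (n i) : ℝ)) :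
    (∀ x, p x = ∑ i, π i • ((2 * area)⁻¹ • (x - W i))) ∧
      ∀ π' : Fin 3 → ℝ,
        (∀ x, p x = ∑ i, π' i • ((2 * area)⁻¹ • (x - W i))) → π' = π := by
  have hsum := sum_cross_smul_sub W c
  have hD : cross (W 1 - W 0) (W 2 - W 0) ≠ 0 := hnd
  have h2area : 2 * area = |cross (W 1 - W 0) (W 2 - W 0)| := by
    rw [harea, mul_div_cancel₀ _ two_ne_zero]; rfl
  set D := cross (W 1 - W 0) (W 2 - W 0)
  have habs : |D| ≠ 0 := abs_ne_zero.2 hD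
  have hflux : ∀ i, π i = -(D / |D|) * cross (c + lam • W (i + 1)) (W (i + 1) - W (i + 2)) := by
    intro i
    rw [hπ i]
    simp only [hp]
    field_simp
    linear_combination abs_cross_mul_integral_edge_flux (hperp i) (hunit i) (hout i) c lam
  have hrepr : ∀ x, p x = ∑ i, π i • ((2 * area)⁻¹ • (x - W i)) := by
    intro x
    have hscalar : |D|⁻¹ * -(D / |D|) * -D = 1 := by
      field_simp
      rw [sq_abs]
    calc p x = ((2 * area)⁻¹ * -(D / |D|)) • -D • (c + lam • x) := by
          rw [hp, smul_smul, h2area, hscalar, one_smul]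
      _ = ∑ i, π i • ((2 * area)⁻¹ • (x - W i)) := by
          simp_rw [← hsum, Finset.smul_sum, smul_smul, hflux]
          congr! 2
          ring
  refine ⟨hrepr, fun π' hπ' => ?_⟩
  have harea0 : area ≠ 0 := fun h0 => habs (by rw [← h2area, h0, mul_zero])
  have h := (affineIndependent_of_cross_ne_zero hD).eq_zero_of_forall_sum_smul_sub_eq_zero
    (a := fun i => (π' i - π i) * (2 * area)⁻¹) fun x => by
      simp_rw [sub_mul, sub_smul, mul_smul, Finset.sum_sub_distrib, ← hπ', ← hrepr, sub_self]
  funext i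
  simpa [sub_eq_zero, harea0] using congrFun h i
end
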